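/- arXiv:2407.14813 — 4 statements merged into one kernel-verified Lean document; each statement's English description precedes it below -/
import Mathlib

section
/- Let H be a real inner product space, A : H → H a bounded self-adjoint positive-semidefinite linear operator with operator norm ‖A‖, and let u^{n+1}, u^n, u^{n−1} ∈ H. Then ⟨A(2u^n − u^{n−1}), u^{n+1} − u^n⟩ ≥ (1/2)⟨A u^{n+1}, u^{n+1}⟩ − (1/2)⟨A u^n, u^n⟩ − (1/2)‖A‖·(‖u^n − u^{n−1}‖² + 2‖u^{n+1} − u^n‖²). -/
open scoped RealInnerProductSpace

/-- Key estimate for the explicitly extrapolated long-range term in the BDF2 energy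
stability proof: for a bounded self-adjoint positive-semidefinite operator `A` with
`‖A v‖ ≤ C_A ‖v‖`,
`⟨A(2uⁿ - uⁿ⁻¹), uⁿ⁺¹ - uⁿ⟩ ≥ (1/2)⟨A uⁿ⁺¹, uⁿ⁺¹⟩ - (1/2)⟨A uⁿ, uⁿ⟩
  - (1/2) C_A (‖uⁿ - uⁿ⁻¹‖² + 2‖uⁿ⁺¹ - uⁿ‖²)`. -/
theorem extrapolated_longrange_estimate
    {H : Type*} [NormedAddCommGroup H] [InnerProductSpace ℝ H]
    (A : H →ₗ[ℝ] H) (C_A : ℝ)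
    (hsa : ∀ x y : H, ⟪A x, y⟫ = ⟪x, A y⟫)
    (hpsd : ∀ x : H, 0 ≤ ⟪A x, x⟫)
    (hbound : ∀ v : H, ‖A v‖ ≤ C_A * ‖v‖)
    (unp1 un unm1 : H) :
    ⟪A ((2 : ℝ) • un - unm1), unp1 - un⟫ ≥
      (1 / 2) * ⟪A unp1, unp1⟫ - (1 / 2) * ⟪A un, un⟫ -
        (1 / 2) * C_A * (‖un - unm1‖ ^ 2 + 2 * ‖unp1 - un‖ ^ 2) := by
  set e := unp1 - un with he
  set d := un - unm1 with hd
  have key1 : ⟪A ((2 : ℝ) • un - unm1), e⟫ = ⟪A un, e⟫ + ⟪A d, e⟫ := by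
    have h : (2 : ℝ) • un - unm1 = un + d := by rw [hd, two_smul]; abel
    rw [h, map_add, inner_add_left]
  have hun : unp1 = un + e := by rw [he]; abel
  have key2 : ⟪A unp1, unp1⟫ = ⟪A un, un⟫ + 2 * ⟪A un, e⟫ + ⟪A e, e⟫ := by
    have hswap : ⟪A e, un⟫ = ⟪A un, e⟫ := by rw [hsa, real_inner_comm]
    rw [hun, map_add]
    simp only [inner_add_left, inner_add_right, hswap]
    ring
  have h3 : ⟪A e, e⟫ ≤ C_A * ‖e‖ ^ 2 := by
    calc ⟪A e, e⟫ ≤ ‖A e‖ * ‖e‖ := real_inner_le_norm _ _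
      _ ≤ C_A * ‖e‖ * ‖e‖ := by
          have := hbound e
          nlinarith [norm_nonneg e]
      _ = C_A * ‖e‖ ^ 2 := by ring
  have h4 : -(C_A * ‖d‖ * ‖e‖) ≤ ⟪A d, e⟫ := by
    have h1 : |⟪A d, e⟫| ≤ ‖A d‖ * ‖e‖ := abs_real_inner_le_norm _ _
    have h2 : ‖A d‖ * ‖e‖ ≤ C_A * ‖d‖ * ‖e‖ := by
      have := hbound d
      nlinarith [norm_nonneg e]
    nlinarith [neg_abs_le ⟪A d, e⟫]
  have h5 : ‖d‖ * ‖e‖ ≤ (‖d‖ ^ 2 + ‖e‖ ^ 2) / 2 := by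
    nlinarith [sq_nonneg (‖d‖ - ‖e‖)]
  by_cases hc : 0 ≤ C_A
  · have h6 : C_A * (‖d‖ * ‖e‖) ≤ C_A * ((‖d‖ ^ 2 + ‖e‖ ^ 2) / 2) :=
      mul_le_mul_of_nonneg_left h5 hc
    rw [key1, key2]
    nlinarith
  · have h0 : ∀ v : H, v = 0 := by
      intro v
      have h1 := hbound v
      have h2 : ‖v‖ = 0 := by nlinarith [norm_nonneg (A v), norm_nonneg v]
      exact norm_eq_zero.mp h2
    rw [h0 unp1, h0 un, h0 unm1]
    simp [h0 d, h0 e]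
end

section
/- Let W : ℝ → ℝ be twice continuously differentiable with |W''(s)| ≤ L for all s ∈ ℝ. Then for all a, b, c ∈ ℝ: W(a) − W(b) ≤ (2W'(b) − W'(c))·(a − b) + (L/2)·((b−c)² + 2(a−b)²). -/
/-! The Lipschitz bound `|W'(x) - W'(y)| ≤ L |x - y|` gives the one-sided Taylor estimate
`W(a) - W(b) ≤ W'(b)(a - b) + (L/2)(a - b)²`. The extrapolation error `(W'(b) - W'(c))(a - b)`
is at most `L |b - c| |a - b|`, which Young's inequality splits into `(L/2)((b - c)² + (a - b)²)`. -/

theorem abs_sub_le_of_abs_deriv_le {f : ℝ → ℝ} {L : ℝ} (hf : Differentiable ℝ f)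
    (hL : ∀ x, |deriv f x| ≤ L) (x y : ℝ) : |f x - f y| ≤ L * |x - y| :=
  convex_univ.norm_image_sub_le_of_norm_deriv_le (fun z _ => hf z) (fun z _ => hL z)
    (Set.mem_univ y) (Set.mem_univ x)

theorem sub_le_deriv_mul_add_of_abs_deriv_sub_le {f : ℝ → ℝ} {L : ℝ} (a b : ℝ)
    (hf : Differentiable ℝ f) (hL : ∀ x, |deriv f x - deriv f b| ≤ L * |x - b|) :
    f a - f b ≤ deriv f b * (a - b) + L / 2 * (a - b) ^ 2 := by
  set d := a - b
  -- Parametrising the segment from `b` to `a` by `t ∈ [0, 1]` avoids a case split on `a ≤ b`.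
  let φ : ℝ → ℝ := fun t => f (b + t * d) - t * (deriv f b * d) - L / 2 * t ^ 2 * d ^ 2
  let φ' : ℝ → ℝ := fun t => (deriv f (b + t * d) - deriv f b) * d - L * t * d ^ 2
  have hφ : ∀ t, HasDerivAt φ (φ' t) t := by
    intro t
    have hline : HasDerivAt (fun t => b + t * d) d t := by
      simpa using ((hasDerivAt_id t).mul_const d).const_add b
    refine ((((hf _).hasDerivAt.comp t hline).sub
      ((hasDerivAt_id t).mul_const (deriv f b * d))).sub
      (((hasDerivAt_pow 2 t).const_mul (L / 2)).mul_const (d ^ 2))).congr_deriv ?_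
    simp only [φ']
    push_cast
    ring
  have hφ'_nonpos : ∀ t ∈ interior (Set.Icc (0 : ℝ) 1), φ' t ≤ 0 := by
    intro t ht
    rw [interior_Icc] at ht
    have ht0 : |t| = t := abs_of_pos ht.1
    calc φ' t ≤ |deriv f (b + t * d) - deriv f b| * |d| - L * t * d ^ 2 := by
          rw [← abs_mul]
          exact sub_le_sub_right (le_abs_self _) _
      _ ≤ L * |t * d| * |d| - L * t * d ^ 2 := by
          have := hL (b + t * d)
          rw [add_sub_cancel_left] at this
          gcongr
      _ = 0 := by rw [abs_mul, ht0, mul_assoc, mul_assoc, abs_mul_abs_self]; ring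
  have hanti : AntitoneOn φ (Set.Icc 0 1) :=
    antitoneOn_of_hasDerivWithinAt_nonpos (convex_Icc 0 1)
      (fun t _ => (hφ t).continuousAt.continuousWithinAt)
      (fun t _ => (hφ t).hasDerivWithinAt) hφ'_nonpos
  have h10 : φ 1 ≤ φ 0 := hanti (by simp) (by simp) zero_le_one
  norm_num [φ, d] at h10
  linarith

/-- For `W : ℝ → ℝ` twice continuously differentiable with `|W''| ≤ L` everywhere,
`W(a) - W(b) ≤ (2W'(b) - W'(c))(a - b) + (L/2)((b-c)² + 2(a-b)²)` for all `a b c`. -/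
theorem double_well_extrapolation_estimate
    (W : ℝ → ℝ) (L : ℝ)
    (hW : ContDiff ℝ 2 W)
    (hL : ∀ s : ℝ, |deriv (deriv W) s| ≤ L)
    (a b c : ℝ) :
    W a - W b ≤ (2 * deriv W b - deriv W c) * (a - b) +
      (L / 2) * ((b - c) ^ 2 + 2 * (a - b) ^ 2) := by
  have hlip := abs_sub_le_of_abs_deriv_le hW.differentiable_deriv_two hL
  have htaylor := sub_le_deriv_mul_add_of_abs_deriv_sub_le a b
    (hW.differentiable two_ne_zero) (fun x => hlip x b)
  have hL0 : 0 ≤ L := (abs_nonneg _).trans (hL 0)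
  have hcross : |(deriv W b - deriv W c) * (a - b)| ≤ L / 2 * ((b - c) ^ 2 + (a - b) ^ 2) :=
    calc |(deriv W b - deriv W c) * (a - b)|
        ≤ L * |b - c| * |a - b| := by rw [abs_mul]; gcongr; exact hlip b c
      _ ≤ L / 2 * ((b - c) ^ 2 + (a - b) ^ 2) := by
        rw [← sq_abs (b - c), ← sq_abs (a - b)]
        nlinarith [two_mul_le_add_sq |b - c| |a - b|]
  linarith [neg_abs_le ((deriv W b - deriv W c) * (a - b))]
end

section
/- Let W : ℝ → ℝ be C² with |W''| ≤ L everywhere. Let Ω be a measure space with finite measure and u^{n+1}, u^n, u^{n−1} ∈ L²(Ω) ∩ L^∞(Ω). Then −⟨2W'(u^n) − W'(u^{n−1}), u^{n+1} − u^n⟩ ≤ −∫_Ω W(u^{n+1}) + ∫_Ω W(u^n) + (L/2)(‖u^n − u^{n−1}‖²_{L²} + 2‖u^{n+1} − u^n‖²_{L²}), where ⟨·,·⟩ is the L² inner product. -/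
/-!
Pointwise, Taylor's formula with a Lipschitz bound `L` on `W'` gives
`W a - W b - W' b (a - b) ≤ (L/2) (a - b)²`, and the extrapolation error satisfies
`-(W' b - W' c)(a - b) ≤ L |b - c| |a - b| ≤ (L/2) ((b - c)² + (a - b)²)`; adding the two and
integrating gives the estimate. Since `W'` grows at most linearly and `W` at most quadratically,
every integrand is integrable as soon as the three states are in `L²` of a finite measure.
-/

open MeasureTheory
open scoped NNReal ENNReal

namespace LipschitzWith

variable {f : ℝ → ℝ} {K : ℝ≥0}

theorem abs_sub_sub_deriv_mul_le (hf' : LipschitzWith K (deriv f)) (hf : Differentiable ℝ f)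
    (x y : ℝ) : |f y - f x - deriv f x * (y - x)| ≤ K / 2 * (y - x) ^ 2 := by
  set h := y - x
  have hg : ∀ t : ℝ, HasDerivAt (fun t => f (x + t * h) - f x - t * (deriv f x * h))
      (deriv f (x + t * h) * h - deriv f x * h) t := by
    intro t
    have hline : HasDerivAt (fun t : ℝ => x + t * h) h t := by
      simpa using ((hasDerivAt_id t).mul_const h).const_add x
    exact (((hf _).hasDerivAt.comp t hline).sub_const (f x)).sub
      (hasDerivAt_mul_const (deriv f x * h))
  have hB : ∀ t : ℝ, HasDerivAt (fun t => K / 2 * h ^ 2 * t ^ 2) (K * h ^ 2 * t) t := by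
    intro t
    refine ((hasDerivAt_pow 2 t).const_mul (K / 2 * h ^ 2 : ℝ)).congr_deriv ?_
    norm_num
    ring
  have bound : ∀ t ∈ Set.Ico (0 : ℝ) 1,
      ‖deriv f (x + t * h) * h - deriv f x * h‖ ≤ K * h ^ 2 * t := by
    rintro t ⟨ht, -⟩
    calc ‖deriv f (x + t * h) * h - deriv f x * h‖
        = |deriv f (x + t * h) - deriv f x| * |h| := by rw [← sub_mul, Real.norm_eq_abs, abs_mul]
      _ ≤ K * |x + t * h - x| * |h| := by
          gcongr
          simpa only [Real.dist_eq] using hf'.dist_le_mul (x + t * h) x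
      _ = K * h ^ 2 * t := by
          rw [add_sub_cancel_left, abs_mul, abs_of_nonneg ht, sq, ← abs_mul_abs_self h]
          ring
  have := image_norm_le_of_norm_deriv_right_le_deriv_boundary
    (fun t _ => (hg t).continuousAt.continuousWithinAt) (fun t _ => (hg t).hasDerivWithinAt)
    (by simp) hB bound (Set.right_mem_Icc.2 zero_le_one)
  simpa [h, Real.norm_eq_abs] using this

theorem neg_extrapolated_deriv_mul_sub_le (hf' : LipschitzWith K (deriv f))
    (hf : Differentiable ℝ f) (a b c : ℝ) :
    -((2 * deriv f b - deriv f c) * (a - b)) ≤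
      -f a + f b + K / 2 * ((b - c) ^ 2 + 2 * (a - b) ^ 2) := by
  have taylor := (abs_le.1 (hf'.abs_sub_sub_deriv_mul_le hf b a)).2
  have cross : -((deriv f b - deriv f c) * (a - b)) ≤ K / 2 * ((b - c) ^ 2 + (a - b) ^ 2) :=
    calc -((deriv f b - deriv f c) * (a - b))
        ≤ |deriv f b - deriv f c| * |a - b| := by rw [← abs_mul]; exact neg_le_abs _
      _ ≤ K * |b - c| * |a - b| := by
          gcongr
          simpa only [Real.dist_eq] using hf'.dist_le_mul b c
      _ ≤ K / 2 * ((b - c) ^ 2 + (a - b) ^ 2) := by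
          nlinarith [two_mul_le_add_sq |b - c| |a - b|, sq_abs (b - c), sq_abs (a - b),
            K.coe_nonneg]
  linarith

theorem comp_memLp_of_isFiniteMeasure {α E F : Type*} [MeasurableSpace α] {μ : Measure α}
    [IsFiniteMeasure μ] [NormedAddCommGroup E] [NormedAddCommGroup F] {g : E → F} {u : α → E}
    {p : ℝ≥0∞}
    (hg : LipschitzWith K g) (hu : MemLp u p μ) : MemLp (fun x => g (u x)) p μ := by
  have hg₀ : MemLp (fun x => g (u x) - g 0) p μ :=
    (hg.sub (LipschitzWith.const (g 0))).comp_memLp (by simp) hu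
  convert hg₀.add (memLp_const (g 0)) using 1
  ext x
  simp

theorem integrable_comp_of_memLp_two {α : Type*} [MeasurableSpace α] {μ : Measure α}
    [IsFiniteMeasure μ] {u : α → ℝ} (hf' : LipschitzWith K (deriv f)) (hf : Differentiable ℝ f)
    (hu : MemLp u 2 μ) : Integrable (fun x => f (u x)) μ := by
  refine Integrable.mono'
    (((integrable_const |f 0|).add ((hu.integrable one_le_two).abs.const_mul |deriv f 0|)).add
      (hu.integrable_sq.const_mul (K / 2)))
    (hf.continuous.comp_aestronglyMeasurable hu.1) (Filter.Eventually.of_forall fun x => ?_)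
  have taylor := abs_le.1 (hf'.abs_sub_sub_deriv_mul_le hf 0 (u x))
  have hlin := abs_le.1 (abs_mul (deriv f 0) (u x)).le
  rw [Real.norm_eq_abs, abs_le]
  simp only [sub_zero, Pi.add_apply] at taylor ⊢
  constructor <;> linarith [neg_abs_le (f 0), le_abs_self (f 0)]

end LipschitzWith

theorem integrated_nonlinear_estimate_general
    {Ω : Type*} [MeasurableSpace Ω] (μ : Measure Ω) [IsFiniteMeasure μ]
    (W : ℝ → ℝ) (L : ℝ)
    (hW : ContDiff ℝ 2 W)
    (hL : ∀ s : ℝ, |deriv (deriv W) s| ≤ L)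
    (unp1 un unm1 : Ω → ℝ)
    (h1 : MemLp unp1 2 μ)
    (h2 : MemLp un 2 μ)
    (h3 : MemLp unm1 2 μ) :
    -(∫ x, (2 * deriv W (un x) - deriv W (unm1 x)) * (unp1 x - un x) ∂μ) ≤
      -(∫ x, W (unp1 x) ∂μ) + (∫ x, W (un x) ∂μ) +
        (L / 2) * ((∫ x, (un x - unm1 x) ^ 2 ∂μ) +
          2 * (∫ x, (unp1 x - un x) ^ 2 ∂μ)) := by
  lift L to ℝ≥0 using (abs_nonneg _).trans (hL 0)
  have hWd : Differentiable ℝ W := hW.differentiable two_ne_zero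
  have hW' : LipschitzWith L (deriv W) :=
    lipschitzWith_of_nnnorm_deriv_le ((hW.iterate_deriv' 1 1).differentiable one_ne_zero)
      fun s => by simpa [← NNReal.coe_le_coe] using hL s
  have hlhs : Integrable (fun x => (2 * deriv W (un x) - deriv W (unm1 x)) * (unp1 x - un x)) μ :=
    (((hW'.comp_memLp_of_isFiniteMeasure h2).const_mul 2).sub
      (hW'.comp_memLp_of_isFiniteMeasure h3)).integrable_mul (h1.sub h2)
  have hWn1 : Integrable (fun x => -W (unp1 x)) μ :=
    (hW'.integrable_comp_of_memLp_two hWd h1).neg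
  have hWn := hW'.integrable_comp_of_memLp_two hWd h2
  have hsq : Integrable (fun x => (un x - unm1 x) ^ 2) μ := (h2.sub h3).integrable_sq
  have hsq' : Integrable (fun x => 2 * (unp1 x - un x) ^ 2) μ :=
    (h1.sub h2).integrable_sq.const_mul 2
  have hW₀ : Integrable (fun x => -W (unp1 x) + W (un x)) μ := hWn1.add hWn
  have hsq₀ : Integrable (fun x => (un x - unm1 x) ^ 2 + 2 * (unp1 x - un x) ^ 2) μ :=
    hsq.add hsq'
  calc -(∫ x, (2 * deriv W (un x) - deriv W (unm1 x)) * (unp1 x - un x) ∂μ)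
      = ∫ x, -((2 * deriv W (un x) - deriv W (unm1 x)) * (unp1 x - un x)) ∂μ :=
        (integral_neg _).symm
    _ ≤ ∫ x, (-W (unp1 x) + W (un x) +
          L / 2 * ((un x - unm1 x) ^ 2 + 2 * (unp1 x - un x) ^ 2)) ∂μ :=
        integral_mono hlhs.neg (hW₀.add (hsq₀.const_mul _))
          fun x => hW'.neg_extrapolated_deriv_mul_sub_le hWd (unp1 x) (un x) (unm1 x)
    _ = _ := by
        rw [integral_add hW₀ (hsq₀.const_mul _), integral_add hWn1 hWn, integral_neg,
          integral_const_mul, integral_add hsq hsq', integral_const_mul]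

/-- Integrated estimate for the explicitly extrapolated nonlinear term in the BDF2 energy
stability proof: for `W` C² with `|W''| ≤ L`, a finite measure space `Ω`, and
`uⁿ⁺¹, uⁿ, uⁿ⁻¹ ∈ L² ∩ L^∞`,
`-⟨2W'(uⁿ) - W'(uⁿ⁻¹), uⁿ⁺¹ - uⁿ⟩ ≤ -∫ W(uⁿ⁺¹) + ∫ W(uⁿ)
   + (L/2)(‖uⁿ - uⁿ⁻¹‖²_{L²} + 2‖uⁿ⁺¹ - uⁿ‖²_{L²})`. -/
theorem integrated_nonlinear_estimate
    {Ω : Type*} [MeasurableSpace Ω] (μ : Measure Ω) [IsFiniteMeasure μ]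
    (W : ℝ → ℝ) (L : ℝ)
    (hW : ContDiff ℝ 2 W)
    (hL : ∀ s : ℝ, |deriv (deriv W) s| ≤ L)
    (unp1 un unm1 : Ω → ℝ)
    (h1 : MemLp unp1 2 μ) (h1' : MemLp unp1 ⊤ μ)
    (h2 : MemLp un 2 μ) (h2' : MemLp un ⊤ μ)
    (h3 : MemLp unm1 2 μ) (h3' : MemLp unm1 ⊤ μ) :
    -(∫ x, (2 * deriv W (un x) - deriv W (unm1 x)) * (unp1 x - un x) ∂μ) ≤
      -(∫ x, W (unp1 x) ∂μ) + (∫ x, W (un x) ∂μ) +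
        (L / 2) * ((∫ x, (un x - unm1 x) ^ 2 ∂μ) +
          2 * (∫ x, (unp1 x - un x) ^ 2 ∂μ)) :=
  integrated_nonlinear_estimate_general μ W L hW hL unp1 un unm1 h1 h2 h3
end

section
/- Let Ω be a finite measure space and M ≥ 0, ω ∈ ℝ, and u^{n+1}, u^n, u^{n−1} ∈ L²(Ω). Then −M·(∫_Ω (2u^n − u^{n−1}) − ω|Ω|)·∫_Ω (u^{n+1} − u^n) ≤ −(M/2)(∫_Ω u^{n+1} − ω|Ω|)² + (M/2)(∫_Ω u^n − ω|Ω|)² + (M/2)|Ω|·(‖u^n − u^{n−1}‖²_{L²} + 2‖u^{n+1} − u^n‖²_{L²}). -/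
open MeasureTheory

theorem sq_integral_le_measureReal_univ_mul_integral_sq {α : Type*} [MeasurableSpace α]
    {μ : Measure α} [IsFiniteMeasure μ] {v : α → ℝ} (hv : MemLp v 2 μ) :
    (∫ x, v x ∂μ) ^ 2 ≤ μ.real Set.univ * ∫ x, v x ^ 2 ∂μ := by
  rcases eq_zero_or_neZero μ with rfl | _
  · simp
  have hT : 0 < μ.real Set.univ := measureReal_univ_pos
  have jensen : (⨍ x, v x ∂μ) ^ 2 ≤ ⨍ x, v x ^ 2 ∂μ :=
    (Even.convexOn_pow even_two).map_average_le (continuous_pow 2).continuousOn isClosed_univ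
      (by simp) (hv.integrable one_le_two) hv.integrable_sq
  rwa [average_eq, average_eq, smul_eq_mul, smul_eq_mul, mul_pow, inv_pow, sq (μ.real _),
    mul_inv, mul_assoc, mul_le_mul_iff_right₀ (inv_pos.2 hT), inv_mul_le_iff₀ hT] at jensen

theorem bdf2_penalty_le_of_sq_sub_le {M T ω a b c P Q : ℝ} (hM : 0 ≤ M)
    (hP : (b - c) ^ 2 ≤ T * P) (hQ : (a - b) ^ 2 ≤ T * Q) :
    -(M * ((2 * b - c) - ω * T) * (a - b)) ≤
      -(M / 2) * (a - ω * T) ^ 2 + (M / 2) * (b - ω * T) ^ 2 + (M / 2) * T * (P + 2 * Q) := by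
  -- right minus left is `(M/2) * ((T P - (b-c)²) + 2 (T Q - (a-b)²) + (a-c)²)`
  nlinarith [mul_le_mul_of_nonneg_left hP hM, mul_le_mul_of_nonneg_left hQ hM,
    mul_nonneg hM (sq_nonneg (a - c))]

/-- Estimate for the penalty term in the BDF2 energy stability proof:
`-M (∫(2uⁿ - uⁿ⁻¹) - ω|Ω|) ∫(uⁿ⁺¹ - uⁿ)
  ≤ -(M/2)(∫ uⁿ⁺¹ - ω|Ω|)² + (M/2)(∫ uⁿ - ω|Ω|)²
    + (M/2)|Ω| (‖uⁿ - uⁿ⁻¹‖²_{L²} + 2‖uⁿ⁺¹ - uⁿ‖²_{L²})`. -/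
theorem penalty_term_estimate
    {Ω : Type*} [MeasurableSpace Ω] (μ : Measure Ω) [IsFiniteMeasure μ]
    (M ω : ℝ) (hM : 0 ≤ M)
    (unp1 un unm1 : Ω → ℝ)
    (h1 : MemLp unp1 2 μ) (h2 : MemLp un 2 μ) (h3 : MemLp unm1 2 μ) :
    -(M * ((∫ x, (2 * un x - unm1 x) ∂μ) - ω * (μ Set.univ).toReal) *
        (∫ x, (unp1 x - un x) ∂μ)) ≤
      -(M / 2) * ((∫ x, unp1 x ∂μ) - ω * (μ Set.univ).toReal) ^ 2 +
        (M / 2) * ((∫ x, un x ∂μ) - ω * (μ Set.univ).toReal) ^ 2 +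
        (M / 2) * (μ Set.univ).toReal *
          ((∫ x, (un x - unm1 x) ^ 2 ∂μ) + 2 * (∫ x, (unp1 x - un x) ^ 2 ∂μ)) := by
  have i1 := h1.integrable one_le_two
  have i2 := h2.integrable one_le_two
  have i3 := h3.integrable one_le_two
  have hP := sq_integral_le_measureReal_univ_mul_integral_sq (h2.sub h3)
  have hQ := sq_integral_le_measureReal_univ_mul_integral_sq (h1.sub h2)
  simp only [Pi.sub_apply, integral_sub i2 i3, integral_sub i1 i2] at hP hQ
  rw [integral_sub (i2.const_mul 2) i3, integral_const_mul, integral_sub i1 i2]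
  exact bdf2_penalty_le_of_sq_sub_le hM hP hQ
end
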